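/- None of the three augmented long claws is a circular-arc graph. -/

import Mathlib

open SimpleGraph

/-- `G` is an interval graph: vertices can be assigned nonempty closed real intervals such that
distinct vertices are adjacent iff their intervals intersect. -/
def IsIntervalGraph {V : Type*} (G : SimpleGraph V) : Prop :=
  ∃ I : V → Set ℝ, (∀ v, ∃ a b : ℝ, a ≤ b ∧ I v = Set.Icc a b) ∧
    ∀ u v : V, u ≠ v → (G.Adj u v ↔ (I u ∩ I v).Nonempty)

/-- The ball `B_G(v, r/2)`: vertices at distance at most `⌊r/2⌋` from `v`, and edges `xy` of `G`
with `d(v,x) + d(v,y) < r`. -/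
def ball {V : Type*} (G : SimpleGraph V) (v : V) (r : ℕ) : G.Subgraph where
  verts := {x | G.Reachable v x ∧ G.dist v x ≤ r / 2}
  Adj x y := G.Adj x y ∧ (G.Reachable v x ∧ G.dist v x ≤ r / 2) ∧
    (G.Reachable v y ∧ G.dist v y ≤ r / 2) ∧ G.dist v x + G.dist v y < r
  adj_sub h := h.1
  edge_vert h := h.2.1
  symm := ⟨fun x y h => ⟨h.1.symm, h.2.2.1, h.2.1, by have := h.2.2.2; omega⟩⟩

/-- `G` is `r`-locally interval if all its `r/2`-balls are interval graphs. -/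
def LocallyInterval {V : Type*} (G : SimpleGraph V) (r : ℕ) : Prop :=
  ∀ v : V, IsIntervalGraph (_root_.ball G v r).coe

/-- `G` is a path graph (on at least one vertex). -/
def IsPathGraph {V : Type*} (G : SimpleGraph V) : Prop :=
  ∃ n : ℕ, 1 ≤ n ∧ Nonempty (G ≃g pathGraph n)

/-- `G` contains an induced subgraph isomorphic to `H`. -/
def HasInducedCopy {V W : Type*} (G : SimpleGraph V) (H : SimpleGraph W) : Prop :=
  ∃ s : Set V, Nonempty (G.induce s ≃g H)

/-- `G` is chordal: no induced cycle of length at least 4. -/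
def IsChordal {V : Type*} (G : SimpleGraph V) : Prop :=
  ∀ n : ℕ, 4 ≤ n → ¬ HasInducedCopy G (cycleGraph n)

/-- `G` is `r`-chordal: no induced cycle of length `ℓ` with `4 ≤ ℓ ≤ r`. -/
def RChordal {V : Type*} (G : SimpleGraph V) (r : ℕ) : Prop :=
  ∀ n : ℕ, 4 ≤ n → n ≤ r → ¬ HasInducedCopy G (cycleGraph n)

/-- The wheel `W_n`: a cycle of length `n` together with a vertex adjacent to all its vertices. -/
def wheel (n : ℕ) : SimpleGraph (Option (Fin n)) :=
  SimpleGraph.fromRel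
    (fun u v => u = none ∨ ∃ a b : Fin n, u = some a ∧ v = some b ∧ (cycleGraph n).Adj a b)

/-- `G` is wheel-free: no induced `W_n` for `n ≥ 4`. -/
def WheelFree {V : Type*} (G : SimpleGraph V) : Prop :=
  ∀ n : ℕ, 4 ≤ n → ¬ HasInducedCopy G (wheel n)

/-- `A` is a circular-arc representation of `G` over the cycle `cycleGraph n`: each vertex is
assigned a nonempty subpath of the cycle, and distinct vertices are adjacent iff their subpaths
share a vertex. -/
def IsCircularArcRep {V : Type*} {n : ℕ} (G : SimpleGraph V)
    (A : V → (cycleGraph n).Subgraph) : Prop :=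
  (∀ v : V, IsPathGraph (A v).coe) ∧
    ∀ u v : V, u ≠ v → (G.Adj u v ↔ ((A u).verts ∩ (A v).verts).Nonempty)

/-- `G` is a circular-arc graph. -/
def IsCircularArcGraph {V : Type*} (G : SimpleGraph V) : Prop :=
  ∃ n : ℕ, 3 ≤ n ∧ ∃ A : V → (cycleGraph n).Subgraph, IsCircularArcRep G A

/-- `G` is an `r`-acyclic circular-arc graph: it has a circular-arc representation in which the
union of the arcs of any at most `r` vertices is acyclic. -/
def IsRAcyclicCircularArcGraph {V : Type*} (G : SimpleGraph V) (r : ℕ) : Prop :=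
  ∃ n : ℕ, 3 ≤ n ∧ ∃ A : V → (cycleGraph n).Subgraph, IsCircularArcRep G A ∧
    ∀ X : Finset V, X.card ≤ r → ((⨆ x ∈ X, A x).coe).IsAcyclic

/-- The long claw: `K_{1,3}` with every edge subdivided once. Center `0`, middle vertices
`1, 2, 3`, leaves `4, 5, 6`. -/
def longClaw : SimpleGraph (Fin 7) :=
  SimpleGraph.fromEdgeSet {s(0,1), s(0,2), s(0,3), s(1,4), s(2,5), s(3,6)}

/-- The long claw plus one leaf–leaf edge. -/
def augLongClaw1 : SimpleGraph (Fin 7) :=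
  SimpleGraph.fromEdgeSet {s(0,1), s(0,2), s(0,3), s(1,4), s(2,5), s(3,6), s(4,5)}

/-- The long claw plus two leaf–leaf edges. -/
def augLongClaw2 : SimpleGraph (Fin 7) :=
  SimpleGraph.fromEdgeSet {s(0,1), s(0,2), s(0,3), s(1,4), s(2,5), s(3,6), s(4,5), s(5,6)}

/-- The long claw plus all three leaf–leaf edges. -/
def augLongClaw3 : SimpleGraph (Fin 7) :=
  SimpleGraph.fromEdgeSet {s(0,1), s(0,2), s(0,3), s(1,4), s(2,5), s(3,6), s(4,5), s(5,6), s(4,6)}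

/-- The cone over `G`: `G` plus one new vertex adjacent to every vertex of `G`. -/
def cone {V : Type*} (G : SimpleGraph V) : SimpleGraph (Option V) :=
  SimpleGraph.fromRel (fun u v => u = none ∨ ∃ a b : V, u = some a ∧ v = some b ∧ G.Adj a b)

/-! In a circular-arc representation, the arc of the centre meets the arcs of the three middle
vertices, which are pairwise disjoint. No middle arc lies inside the centre arc, since it meets the
arc of its leaf, which misses the centre arc. As arcs are connected, each middle arc therefore
contains a boundary point of the centre arc (a point of it with a cycle-neighbour outside it), and
these three points are distinct. But a connected set of vertices of a cycle has at most two boundary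
points: at most one whose successor lies outside it, and at most one whose predecessor does. -/

namespace SimpleGraph

theorem IsPathGraph.connected {V : Type*} {G : SimpleGraph V} (hG : IsPathGraph G) :
    G.Connected := by
  obtain ⟨m, hm, ⟨e⟩⟩ := hG
  obtain ⟨k, rfl⟩ : ∃ k, m = k + 1 := ⟨m - 1, by omega⟩
  exact e.connected_iff.mpr (pathGraph_connected k)

theorem Subgraph.Preconnected.exists_walk_support_subset {V : Type*} {G : SimpleGraph V}
    {H : G.Subgraph} (hH : H.Preconnected) {x y : V} (hx : x ∈ H.verts) (hy : y ∈ H.verts) :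
    ∃ w : G.Walk x y, ∀ z ∈ w.support, z ∈ H.verts := by
  obtain ⟨w, hw⟩ := (preconnected_iff_forall_exists_walk_subgraph H).mp hH hx hy
  exact ⟨w, fun z hz => hw.1 (w.mem_verts_toSubgraph.mpr hz)⟩

variable {n : ℕ}

theorem cycleGraph_adj_iff_eq_add_one {u v : Fin (n + 2)} :
    (cycleGraph (n + 2)).Adj u v ↔ v = u + 1 ∨ u = v + 1 := by
  rw [cycleGraph_adj, sub_eq_iff_eq_add, sub_eq_iff_eq_add, add_comm 1, add_comm 1, or_comm]

/-- The cyclic interval `(i, j]`: the vertices reached from `i` by `1, …, j - i` forward steps. -/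
def cyclicIoc (i j : Fin (n + 2)) : Set (Fin (n + 2)) := {x | x ≠ i ∧ x - i ≤ j - i}

theorem cycleGraph_adj_into_cyclicIoc {i j u v : Fin (n + 2)}
    (huv : (cycleGraph (n + 2)).Adj u v) (hu : u ∉ cyclicIoc i j) (hv : v ∈ cyclicIoc i j) :
    (u = i ∧ v = i + 1) ∨ (u = j + 1 ∧ v = j) := by
  rw [cycleGraph_adj_iff_eq_add_one] at huv
  simp only [cyclicIoc, Set.mem_ofPred_eq] at hu hv
  simp only [Fin.ext_iff, ← Int.ofNat_inj, Fin.le_iff_val_le_val, ← Int.ofNat_le,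
    Fin.coe_int_sub_eq_ite, Fin.coe_int_add_eq_ite, Fin.val_one] at *
  split_ifs at * <;> omega

theorem Walk.mem_support_of_notMem_cyclicIoc_of_mem {i j a b : Fin (n + 2)}
    (w : (cycleGraph (n + 2)).Walk a b) (ha : a ∉ cyclicIoc i j) (hb : b ∈ cyclicIoc i j) :
    (i ∈ w.support ∧ i + 1 ∈ w.support) ∨ (j + 1 ∈ w.support ∧ j ∈ w.support) := by
  obtain ⟨d, hd, hfst, hsnd⟩ := w.exists_boundary_dart (cyclicIoc i j)ᶜ ha (not_not.mpr hb)
  have hfst_mem := w.dart_fst_mem_support_of_mem_darts hd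
  have hsnd_mem := w.dart_snd_mem_support_of_mem_darts hd
  rcases cycleGraph_adj_into_cyclicIoc d.adj hfst (not_not.mp hsnd) with ⟨h₁, h₂⟩ | ⟨h₁, h₂⟩
  · exact .inl ⟨h₁ ▸ hfst_mem, h₂ ▸ hsnd_mem⟩
  · exact .inr ⟨h₁ ▸ hfst_mem, h₂ ▸ hsnd_mem⟩

theorem Walk.add_one_mem_support_or {i j : Fin (n + 2)} (hij : i ≠ j)
    (w : (cycleGraph (n + 2)).Walk i j) : i + 1 ∈ w.support ∨ j + 1 ∈ w.support := by
  have hi : i ∉ cyclicIoc i j := fun h => h.1 rfl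
  have hj : j ∈ cyclicIoc i j := ⟨hij.symm, le_rfl⟩
  rcases w.mem_support_of_notMem_cyclicIoc_of_mem hi hj with h | h
  · exact .inl h.2
  · exact .inr h.1

theorem Walk.sub_one_mem_support_or {i j : Fin (n + 2)} (hij : i ≠ j)
    (w : (cycleGraph (n + 2)).Walk i j) : i - 1 ∈ w.support ∨ j - 1 ∈ w.support := by
  -- `cyclicIoc (j - 1) (i - 1)` is the cyclic interval `[j, i)`.
  obtain ⟨hi, hj⟩ : i ∉ cyclicIoc (j - 1) (i - 1) ∧ j ∈ cyclicIoc (j - 1) (i - 1) := by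
    simp only [cyclicIoc, Set.mem_ofPred_eq, ne_eq, Fin.ext_iff, ← Int.ofNat_inj,
      Fin.le_iff_val_le_val, ← Int.ofNat_le, Fin.coe_int_sub_eq_ite, Fin.val_one] at hij ⊢
    split_ifs <;> omega
  rcases w.mem_support_of_notMem_cyclicIoc_of_mem hi hj with h | h
  · exact .inr h.1
  · exact .inl (by simpa using h.2)

def cycleBoundary (S : Set (Fin (n + 2))) : Set (Fin (n + 2)) :=
  {b ∈ S | b + 1 ∉ S ∨ b - 1 ∉ S}

namespace Subgraph.Preconnected

variable {H : (cycleGraph (n + 2)).Subgraph}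

theorem eq_of_add_one_notMem (hH : H.Preconnected) {x y : Fin (n + 2)} (hx : x ∈ H.verts)
    (hy : y ∈ H.verts) (hx₁ : x + 1 ∉ H.verts) (hy₁ : y + 1 ∉ H.verts) : x = y := by
  by_contra hxy
  obtain ⟨w, hw⟩ := hH.exists_walk_support_subset hx hy
  exact (w.add_one_mem_support_or hxy).elim (hx₁ <| hw _ ·) (hy₁ <| hw _ ·)

theorem eq_of_sub_one_notMem (hH : H.Preconnected) {x y : Fin (n + 2)} (hx : x ∈ H.verts)
    (hy : y ∈ H.verts) (hx₁ : x - 1 ∉ H.verts) (hy₁ : y - 1 ∉ H.verts) : x = y := by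
  by_contra hxy
  obtain ⟨w, hw⟩ := hH.exists_walk_support_subset hx hy
  exact (w.sub_one_mem_support_or hxy).elim (hx₁ <| hw _ ·) (hy₁ <| hw _ ·)

theorem ncard_cycleBoundary_le_two (hH : H.Preconnected) :
    (cycleBoundary H.verts).ncard ≤ 2 := by
  have hsplit : cycleBoundary H.verts ⊆
      {b ∈ H.verts | b + 1 ∉ H.verts} ∪ {b ∈ H.verts | b - 1 ∉ H.verts} := by
    rintro b ⟨hb, hb₁ | hb₁⟩
    exacts [.inl ⟨hb, hb₁⟩, .inr ⟨hb, hb₁⟩]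
  have hright : {b ∈ H.verts | b + 1 ∉ H.verts}.ncard ≤ 1 :=
    Set.ncard_le_one_iff_subsingleton.mpr fun x hx y hy =>
      hH.eq_of_add_one_notMem hx.1 hy.1 hx.2 hy.2
  have hleft : {b ∈ H.verts | b - 1 ∉ H.verts}.ncard ≤ 1 :=
    Set.ncard_le_one_iff_subsingleton.mpr fun x hx y hy =>
      hH.eq_of_sub_one_notMem hx.1 hy.1 hx.2 hy.2
  calc (cycleBoundary H.verts).ncard
      ≤ ({b ∈ H.verts | b + 1 ∉ H.verts} ∪ {b ∈ H.verts | b - 1 ∉ H.verts}).ncard :=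
        Set.ncard_le_ncard hsplit
    _ ≤ 2 := (Set.ncard_union_le _ _).trans (by omega)

theorem exists_mem_cycleBoundary (hH : H.Preconnected) {S : Set (Fin (n + 2))}
    {x y : Fin (n + 2)} (hx : x ∈ H.verts) (hxS : x ∈ S) (hy : y ∈ H.verts) (hyS : y ∉ S) :
    ∃ b ∈ H.verts, b ∈ cycleBoundary S := by
  obtain ⟨w, hw⟩ := hH.exists_walk_support_subset hx hy
  obtain ⟨d, hd, hfst, hsnd⟩ := w.exists_boundary_dart S hxS hyS
  refine ⟨d.fst, hw _ (w.dart_fst_mem_support_of_mem_darts hd), hfst, ?_⟩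
  rcases cycleGraph_adj_iff_eq_add_one.mp d.adj with h | h
  · exact .inl (h ▸ hsnd)
  · exact .inr (by rwa [h, add_sub_cancel_right])

end Subgraph.Preconnected

end SimpleGraph

section CircularArc

variable {V : Type*} {G : SimpleGraph V}

theorem IsCircularArcRep.preconnected {n : ℕ} {A : V → (cycleGraph n).Subgraph}
    (hA : IsCircularArcRep G A) (v : V) : (A v).Preconnected :=
  ⟨(hA.1 v).connected.preconnected⟩

theorem IsCircularArcRep.exists_mem_cycleBoundary {n : ℕ}
    {A : V → (cycleGraph (n + 2)).Subgraph} (hA : IsCircularArcRep G A) {c m l : V}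
    (hcm : G.Adj c m) (hml : G.Adj m l) (hcl : ¬ G.Adj c l) (hlc : l ≠ c) :
    ∃ b ∈ (A m).verts, b ∈ cycleBoundary (A c).verts := by
  obtain ⟨x, hxc, hxm⟩ := (hA.2 c m hcm.ne).mp hcm
  obtain ⟨y, hym, hyl⟩ := (hA.2 m l hml.ne).mp hml
  have hyc : y ∉ (A c).verts := fun hyc => hcl ((hA.2 c l hlc.symm).mpr ⟨y, hyc, hyl⟩)
  exact (hA.preconnected m).exists_mem_cycleBoundary hxm hxc hym hyc

theorem not_isCircularArcGraph_of_three_branches {c : V} {m l : Fin 3 → V}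
    (hm : Function.Injective m) (hmm : Pairwise fun i j => ¬ G.Adj (m i) (m j))
    (hcm : ∀ i, G.Adj c (m i)) (hml : ∀ i, G.Adj (m i) (l i)) (hcl : ∀ i, ¬ G.Adj c (l i))
    (hlc : ∀ i, l i ≠ c) : ¬ IsCircularArcGraph G := by
  rintro ⟨n, hn, A, hA⟩
  obtain ⟨k, rfl⟩ : ∃ k, n = k + 2 := ⟨n - 2, by omega⟩
  choose b hbm hbc using fun i => hA.exists_mem_cycleBoundary (hcm i) (hml i) (hcl i) (hlc i)
  have hb : Function.Injective b := by
    intro i j hij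
    by_contra hne
    exact hmm hne ((hA.2 _ _ (hm.ne hne)).mpr ⟨b i, hbm i, hij ▸ hbm j⟩)
  have := calc
    3 = (Set.range b).ncard := by simp [Set.ncard_range_of_injective hb]
    _ ≤ (cycleBoundary (A c).verts).ncard := Set.ncard_le_ncard (Set.range_subset_iff.mpr hbc)
    _ ≤ 2 := (hA.preconnected c).ncard_cycleBoundary_le_two
  omega

end CircularArc

theorem not_isCircularArcGraph_of_longClaw_le {G : SimpleGraph (Fin 7)} (hG : longClaw ≤ G)
    (h12 : ¬ G.Adj 1 2) (h13 : ¬ G.Adj 1 3) (h23 : ¬ G.Adj 2 3)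
    (h04 : ¬ G.Adj 0 4) (h05 : ¬ G.Adj 0 5) (h06 : ¬ G.Adj 0 6) : ¬ IsCircularArcGraph G := by
  refine not_isCircularArcGraph_of_three_branches (c := 0) (m := ![1, 2, 3]) (l := ![4, 5, 6])
    (by decide) ?_ (fun i => hG ?_) (fun i => hG ?_) (fun i => ?_) (by decide)
  · intro i j hij
    fin_cases i <;> fin_cases j <;> simp_all [G.adj_comm]
  all_goals fin_cases i <;> simp_all [longClaw]

/-- None of the three augmented long claws is a circular-arc graph. -/
theorem stmt_13 :
    ¬ IsCircularArcGraph augLongClaw1 ∧ ¬ IsCircularArcGraph augLongClaw2 ∧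
      ¬ IsCircularArcGraph augLongClaw3 := by
  refine ⟨?_, ?_, ?_⟩ <;> apply not_isCircularArcGraph_of_longClaw_le <;>
    simp [longClaw, augLongClaw1, augLongClaw2, augLongClaw3]
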